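/- Let h ≥ 2, let s, t ∈ ℤ with gcd(h, s−t) = 1, let Y ⊆ ℤ be infinite with infinite gaps, X = ℤ \ Y, and A = {s} ∪ {hx + t : x ∈ X}. If b ∈ ℤ \ A and b ≡ s (mod h), then A ∪ {b} is an asymptotic basis of order h for ℤ. -/
import Mathlib


def sumset (h : ℕ) (A : Set ℤ) : Set ℤ :=
  {n | ∃ f : Fin h → ℤ, (∀ i, f i ∈ A) ∧ n = ∑ i, f i}

def InfiniteGaps (Y : Set ℤ) : Prop :=
  ∀ C : ℤ, 0 < C →
    {p : ℤ × ℤ | p.1 ∈ Y ∧ p.2 ∈ Y ∧ p.1 ≠ p.2 ∧ |p.1 - p.2| ≤ C}.Finite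

lemma mem_sumset_one {A : Set ℤ} {a : ℤ} (ha : a ∈ A) : a ∈ sumset 1 A :=
  ⟨fun _ => a, fun _ => ha, by simp⟩

lemma sumset_add {k l : ℕ} {A : Set ℤ} {m n : ℤ}
    (hm : m ∈ sumset k A) (hn : n ∈ sumset l A) : m + n ∈ sumset (k + l) A := by
  obtain ⟨f, hf, rfl⟩ := hm
  obtain ⟨g, hg, rfl⟩ := hn
  refine ⟨Fin.addCases f g, fun i => ?_, ?_⟩
  · exact Fin.addCases (fun i => by simpa using hf i) (fun i => by simpa using hg i) i
  · rw [Fin.sum_univ_add]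
    simp

lemma sumset_const {k : ℕ} {A : Set ℤ} {a : ℤ} (ha : a ∈ A) : (k : ℤ) * a ∈ sumset k A :=
  ⟨fun _ => a, fun _ => ha, by simp [mul_comm]⟩

lemma exists_pair_notMem {Y : Set ℤ} (hYgaps : InfiniteGaps Y) (m : ℤ) :
    ∃ x : ℤ, x ∉ Y ∧ m - x ∉ Y := by
  have hfin := hYgaps 3 (by norm_num)
  obtain ⟨M, hM⟩ := (hfin.image fun p => |p.1|).bddAbove
  have key : ∀ y y' : ℤ, y ∈ Y → y' ∈ Y → y ≠ y' → |y - y'| ≤ 3 → |y| ≤ M := by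
    intro y y' hy hy' hne hd
    exact hM ⟨(y, y'), ⟨hy, hy', hne, hd⟩, rfl⟩
  set a := max M (m + M) + 1 with ha
  have hMa : M < a := by
    have := le_max_left M (m + M); omega
  have hma : m + M < a := by
    have := le_max_right M (m + M); omega
  by_contra hcon
  push_neg at hcon
  have H : ∀ x : ℤ, x ∈ Y ∨ m - x ∈ Y := fun x => by
    by_cases hx : x ∈ Y
    · exact Or.inl hx
    · exact Or.inr (hcon x hx)
  have h1 : ∀ x1 x2 : ℤ, a ≤ x1 → x1 ≤ a + 2 → a ≤ x2 → x2 ≤ a + 2 →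
      x1 ∈ Y → x2 ∈ Y → x1 = x2 := by
    intro x1 x2 hl1 hr1 hl2 hr2 hy1 hy2
    by_contra hne
    have h := key x1 x2 hy1 hy2 hne (by rw [abs_le]; omega)
    rw [abs_le] at h; omega
  have h2 : ∀ x1 x2 : ℤ, a ≤ x1 → x1 ≤ a + 2 → a ≤ x2 → x2 ≤ a + 2 →
      m - x1 ∈ Y → m - x2 ∈ Y → x1 = x2 := by
    intro x1 x2 hl1 hr1 hl2 hr2 hy1 hy2
    by_contra hne
    have h := key (m - x1) (m - x2) hy1 hy2 (by omega) (by rw [abs_le]; omega)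
    rw [abs_le] at h; omega
  rcases H a with hA | hA <;> rcases H (a+1) with hB | hB <;> rcases H (a+2) with hC | hC
  · exact absurd (h1 a (a+1) le_rfl (by omega) (by omega) (by omega) hA hB) (by omega)
  · exact absurd (h1 a (a+1) le_rfl (by omega) (by omega) (by omega) hA hB) (by omega)
  · exact absurd (h1 a (a+2) le_rfl (by omega) (by omega) (by omega) hA hC) (by omega)
  · exact absurd (h2 (a+1) (a+2) (by omega) (by omega) (by omega) (by omega) hB hC) (by omega)
  · exact absurd (h1 (a+1) (a+2) (by omega) (by omega) (by omega) (by omega) hB hC) (by omega)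
  · exact absurd (h2 a (a+2) le_rfl (by omega) (by omega) (by omega) hA hC) (by omega)
  · exact absurd (h2 a (a+1) le_rfl (by omega) (by omega) (by omega) hA hB) (by omega)
  · exact absurd (h2 a (a+1) le_rfl (by omega) (by omega) (by omega) hA hB) (by omega)

lemma sumset_compl {Y : Set ℤ} (hYgaps : InfiniteGaps Y) :
    ∀ (k : ℕ) (m : ℤ), m ∈ sumset (k + 2) Yᶜ := by
  intro k
  induction k with
  | zero =>
    intro m
    obtain ⟨x, hx, hx'⟩ := exists_pair_notMem hYgaps m
    have := sumset_add (mem_sumset_one (A := Yᶜ) hx) (mem_sumset_one (A := Yᶜ) hx')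
    simpa using this
  | succ k ih =>
    intro m
    obtain ⟨x, hx, -⟩ := exists_pair_notMem hYgaps m
    have h := sumset_add (mem_sumset_one (A := Yᶜ) hx) (ih (m - x))
    have e : 1 + (k + 2) = k + 1 + 2 := by omega
    rw [e] at h
    simpa using h

lemma sumset_affine {k : ℕ} {X A' : Set ℤ} {c t m : ℤ}
    (hm : m ∈ sumset k X) (hmap : ∀ x ∈ X, c * x + t ∈ A') :
    c * m + (k : ℤ) * t ∈ sumset k A' := by
  obtain ⟨f, hf, rfl⟩ := hm
  refine ⟨fun i => c * f i + t, fun i => hmap _ (hf i), ?_⟩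
  rw [Finset.sum_add_distrib, ← Finset.mul_sum]
  simp [mul_comm]

theorem stmt9 (h : ℕ) (hh : 2 ≤ h) (s t : ℤ)
    (hgcd : Int.gcd (h : ℤ) (s - t) = 1)
    (Y : Set ℤ) (hYinf : Y.Infinite) (hYgaps : InfiniteGaps Y)
    (X : Set ℤ) (hX : X = Yᶜ)
    (A : Set ℤ) (hA : A = {s} ∪ {m : ℤ | ∃ x ∈ X, m = (h : ℤ) * x + t})
    (b : ℤ) (hb : b ∉ A) (hbs : b ≡ s [ZMOD (h : ℤ)]) :
    (sumset h (A ∪ {b}))ᶜ.Finite := by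
  subst hX hA
  set B : Set ℤ := ({s} ∪ {m : ℤ | ∃ x ∈ Yᶜ, m = (h : ℤ) * x + t}) ∪ {b} with hB
  have hsB : s ∈ B := Or.inl (Or.inl rfl)
  have hbB : b ∈ B := Or.inr rfl
  have hxB : ∀ x : ℤ, x ∉ Y → (h : ℤ) * x + t ∈ B := fun x hx => Or.inl (Or.inr ⟨x, hx, rfl⟩)
  -- b = s + h * d
  obtain ⟨d, hd⟩ : (h : ℤ) ∣ b - s := hbs.symm.dvd
  have hbs' : b ≠ s := fun he => hb (he ▸ Or.inl rfl)
  have hd0 : d ≠ 0 := by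
    intro he; rw [he, mul_zero] at hd; exact hbs' (by omega)
  -- coprimality
  obtain ⟨u, v, huv⟩ : IsCoprime (h : ℤ) (s - t) := Int.isCoprime_iff_gcd_eq_one.mpr hgcd
  -- finite exceptional set
  have hS := hYgaps |d| (abs_pos.mpr hd0)
  apply Set.Finite.subset (hS.image (fun p : ℤ × ℤ => ((h : ℤ) - 1) * s + t + (h : ℤ) * p.1))
  intro n hn
  have hn : n ∉ sumset h B := hn
  -- find j
  have hj0 : (h : ℤ) ∣ n - (v * n) * (s - t) := ⟨u * n, by linear_combination -n * huv⟩
  have hhpos : (0 : ℤ) < (h : ℤ) := by omega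
  set j : ℕ := (v * n % (h : ℤ)).toNat with hjdef
  have hjcast : (j : ℤ) = v * n % (h : ℤ) :=
    Int.toNat_of_nonneg (Int.emod_nonneg _ (by omega))
  have hjlt : j < h := by
    have := Int.emod_lt_of_pos (v * n) hhpos
    omega
  have hjd : (h : ℤ) ∣ n - (j : ℤ) * (s - t) := by
    obtain ⟨q, hq⟩ := hj0
    refine ⟨q + (v * n / (h : ℤ)) * (s - t), ?_⟩
    rw [hjcast, Int.emod_def]
    linear_combination hq
  by_cases hcase : j + 2 ≤ h
  · -- j ≤ h - 2 : representable, contradiction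
    exfalso
    set k : ℕ := h - j with hkdef
    have hjk : (j : ℤ) + (k : ℤ) = (h : ℤ) := by omega
    obtain ⟨q, hq⟩ := hjd
    have hdv : n - (j : ℤ) * s - (k : ℤ) * t = (h : ℤ) * (q - t) := by
      linear_combination hq - t * hjk
    have hmX : (q - t) ∈ sumset k Yᶜ := by
      have hk := sumset_compl hYgaps (k - 2) (q - t)
      rwa [show k - 2 + 2 = k by omega] at hk
    have h1 : (h : ℤ) * (q - t) + (k : ℤ) * t ∈ sumset k B :=
      sumset_affine hmX (fun x hx => hxB x hx)
    have h2 : (j : ℤ) * s ∈ sumset j B := sumset_const hsB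
    have h3 := sumset_add h2 h1
    rw [show j + k = h by omega] at h3
    exact hn (by rw [show n = (j : ℤ) * s + ((h : ℤ) * (q - t) + (k : ℤ) * t) from by
      linear_combination hdv]; exact h3)
  · -- j = h - 1
    have hjc : (j : ℤ) = (h : ℤ) - 1 := by omega
    obtain ⟨q, hq⟩ := hjd
    have hdx : n - ((h : ℤ) - 1) * s - t = (h : ℤ) * (q - t) := by
      linear_combination hq + (s - t) * hjc
    set x : ℤ := q - t with hxdef
    by_cases hxY : x ∈ Y
    · by_cases hxdY : x - d ∈ Y
      · -- exceptional element
        refine ⟨(x, x - d), ⟨hxY, hxdY, by omega, by simp⟩, ?_⟩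
        show ((h : ℤ) - 1) * s + t + (h : ℤ) * x = n
        linear_combination -hdx
      · -- use b together with h*(x-d)+t
        exfalso
        have c1 : ((h - 2 : ℕ) : ℤ) * s ∈ sumset (h - 2) B := sumset_const hsB
        have c2 := sumset_add (sumset_add c1 (mem_sumset_one hbB))
          (mem_sumset_one (hxB (x - d) hxdY))
        rw [show h - 2 + 1 + 1 = h by omega] at c2
        have hc : ((h - 2 : ℕ) : ℤ) = (h : ℤ) - 2 := by omega
        exact hn (by rw [show n = ((h - 2 : ℕ) : ℤ) * s + b + ((h : ℤ) * (x - d) + t) from by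
          rw [hc]; linear_combination hdx - hd]; exact c2)
    · -- x ∈ X
      exfalso
      have c1 : ((h - 1 : ℕ) : ℤ) * s ∈ sumset (h - 1) B := sumset_const hsB
      have c2 := sumset_add c1 (mem_sumset_one (hxB x hxY))
      rw [show h - 1 + 1 = h by omega] at c2
      have hc : ((h - 1 : ℕ) : ℤ) = (h : ℤ) - 1 := by omega
      exact hn (by rw [show n = ((h - 1 : ℕ) : ℤ) * s + ((h : ℤ) * x + t) from by
        rw [hc]; linear_combination hdx]; exact c2)
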